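/- arXiv:2105.00406 — 6 statements merged into one kernel-verified Lean document; each statement's English description precedes it below -/
import Mathlib

section
/- Let P_{A^n} be a pmf on strings of length n over a finite alphabet A and Q_T a pmf on A with full support. Let π̄ denote the average empirical pmf, π̄(a) = (1/n) Σ_{a^n} P_{A^n}(a^n) n_a(a^n), where n_a(a^n) counts occurrences of letter a in a^n. Then D(P_{A^n} ‖ Q_T^n) = n·X(π̄, Q_T) − H(P_{A^n}), where X denotes cross entropy (base 2) and H entropy (base 2). -/
open Finset Real

/-- D(P_{A^n} ‖ Q_T^n) = n·X(π̄, Q_T) − H(P_{A^n}), where π̄ is the average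
empirical pmf of the string distribution P_{A^n}. -/
theorem divergence_eq_n_crossentropy_sub_entropy
    {A : Type*} [Fintype A] [DecidableEq A] (n : ℕ) (hn : 0 < n)
    (P : (Fin n → A) → ℝ)
    (hP0 : ∀ x, 0 ≤ P x) (hP1 : ∑ x, P x = 1)
    (QT : A → ℝ) (hQT0 : ∀ a, 0 < QT a) (hQT1 : ∑ a, QT a = 1)
    (πbar : A → ℝ)
    (hπbar : ∀ a, πbar a =
      (1 / (n : ℝ)) * ∑ x, P x * ((Finset.univ.filter (fun i => x i = a)).card : ℝ)) :
    ∑ x, P x * Real.logb 2 (P x / ∏ i, QT (x i)) =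
      (n : ℝ) * (∑ a, πbar a * (-Real.logb 2 (QT a)))
        - ∑ x, P x * (-Real.logb 2 (P x)) := by
  have hprodpos : ∀ x : Fin n → A, 0 < ∏ i, QT (x i) := fun x =>
    Finset.prod_pos (fun i _ => hQT0 _)
  have key : ∀ x : Fin n → A, P x * Real.logb 2 (P x / ∏ i, QT (x i)) =
      P x * Real.logb 2 (P x) - P x * Real.logb 2 (∏ i, QT (x i)) := by
    intro x
    rcases eq_or_lt_of_le (hP0 x) with h | h
    · simp [← h]
    · rw [Real.logb_div (ne_of_gt h) (ne_of_gt (hprodpos x)), mul_sub]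
  simp only [key, Finset.sum_sub_distrib]
  have h1 : ∀ x : Fin n → A, Real.logb 2 (∏ i, QT (x i)) =
      ∑ a, ((Finset.univ.filter (fun i => x i = a)).card : ℝ) * Real.logb 2 (QT a) := by
    intro x
    rw [Real.logb_prod _ _ (fun i _ => (hQT0 (x i)).ne')]
    rw [← Finset.sum_fiberwise Finset.univ x (fun i => Real.logb 2 (QT (x i)))]
    refine Finset.sum_congr rfl fun a _ => ?_
    rw [Finset.sum_congr rfl (fun i hi => ?_), Finset.sum_const, nsmul_eq_mul]
    rw [(Finset.mem_filter.mp hi).2]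
  have hmain : ∑ x, P x * Real.logb 2 (∏ i, QT (x i))
      = (n : ℝ) * ∑ a, πbar a * Real.logb 2 (QT a) := by
    simp only [h1, Finset.mul_sum]
    rw [Finset.sum_comm]
    refine Finset.sum_congr rfl fun a _ => ?_
    have : (n : ℝ) * πbar a = ∑ x, P x * ((Finset.univ.filter (fun i => x i = a)).card : ℝ) := by
      rw [hπbar a]
      field_simp
    simp only [← mul_assoc]
    rw [← Finset.sum_mul, ← this]
  rw [hmain]
  simp only [mul_neg, Finset.sum_neg_distrib]
  ring
end

section
/- Let P, Q, R be pmfs on a finite alphabet A with p_min = min_a P(a) > 0 and r_min = min_a R(a) > 0. Let d₁ = Σ_a |P(a) − Q(a)|. If d₁ < 2·p_min, then D(Q‖R) − D(P‖R) ≤ (d₁/2) · log₂( ((p_max + d₁/2)/(p_min − d₁/2)) · (r_max/r_min) ), where p_max = max_a P(a), r_max = max_a R(a). -/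
open Finset Real

/-- Lemma 1: if d₁ = ‖P−Q‖₁ < 2 p_min then
D(Q‖R) − D(P‖R) ≤ (d₁/2) log₂(((p_max+d₁/2)/(p_min−d₁/2))·(r_max/r_min)). -/
theorem divergence_difference_bound
    {A : Type*} [Fintype A] [Nonempty A]
    (P Q R : A → ℝ)
    (hP0 : ∀ a, 0 ≤ P a) (hP1 : ∑ a, P a = 1)
    (hQ0 : ∀ a, 0 ≤ Q a) (hQ1 : ∑ a, Q a = 1)
    (hR0 : ∀ a, 0 ≤ R a) (hR1 : ∑ a, R a = 1)
    (pmin pmax rmin rmax d1 : ℝ)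
    (hpmin : pmin = Finset.univ.inf' Finset.univ_nonempty P)
    (hpmax : pmax = Finset.univ.sup' Finset.univ_nonempty P)
    (hrmin : rmin = Finset.univ.inf' Finset.univ_nonempty R)
    (hrmax : rmax = Finset.univ.sup' Finset.univ_nonempty R)
    (hpminpos : 0 < pmin) (hrminpos : 0 < rmin)
    (hd1 : d1 = ∑ a, |P a - Q a|)
    (hlt : d1 < 2 * pmin) :
    (∑ a, Q a * Real.logb 2 (Q a / R a)) - (∑ a, P a * Real.logb 2 (P a / R a)) ≤
      (d1 / 2) * Real.logb 2 (((pmax + d1 / 2) / (pmin - d1 / 2)) * (rmax / rmin)) := by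
  have hlog2 : (0:ℝ) < Real.log 2 := Real.log_pos one_lt_two
  have hd1nn : 0 ≤ d1 := by
    rw [hd1]; exact Finset.sum_nonneg fun a _ => abs_nonneg _
  set h := d1 / 2 with hh
  have hhnn : 0 ≤ h := by positivity
  set f : A → ℝ := fun a => max (Q a - P a) 0 with hfdef
  set g : A → ℝ := fun a => max (P a - Q a) 0 with hgdef
  have hf0 : ∀ a, 0 ≤ f a := fun a => le_max_right _ _
  have hg0 : ∀ a, 0 ≤ g a := fun a => le_max_right _ _
  have hfg_add : ∀ a, f a + g a = |P a - Q a| := by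
    intro a
    have : P a - Q a = -(Q a - P a) := by ring
    rw [abs_sub_comm, hfdef, hgdef]
    simp only [this]
    exact max_zero_add_max_neg_zero_eq_abs_self _
  have hfg_sub : ∀ a, f a - g a = Q a - P a := by
    intro a
    rcases le_total (Q a) (P a) with hle | hle
    · simp only [hfdef, hgdef, max_eq_right (by linarith : Q a - P a ≤ 0),
        max_eq_left (by linarith : (0:ℝ) ≤ P a - Q a)]
      ring
    · simp [hfdef, hgdef, max_eq_left (by linarith : (0:ℝ) ≤ Q a - P a),
        max_eq_right (by linarith : P a - Q a ≤ 0)]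
  have hsum_add : ∑ a, (f a + g a) = d1 := by
    rw [hd1]; exact Finset.sum_congr rfl fun a _ => hfg_add a
  have hsum_sub : ∑ a, (f a - g a) = 0 := by
    rw [Finset.sum_congr rfl fun a _ => hfg_sub a, Finset.sum_sub_distrib, hP1, hQ1]
    ring
  have hsumf : ∑ a, f a = h := by
    have h1 : ∑ a, f a + ∑ a, g a = d1 := by
      rw [← Finset.sum_add_distrib]; exact hsum_add
    have h2 : ∑ a, f a - ∑ a, g a = 0 := by
      rw [← Finset.sum_sub_distrib]; exact hsum_sub
    rw [hh]; linarith
  have hsumg : ∑ a, g a = h := by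
    have h1 : ∑ a, f a + ∑ a, g a = d1 := by
      rw [← Finset.sum_add_distrib]; exact hsum_add
    rw [hh]; linarith [hsumf]
  have hfle : ∀ a, f a ≤ h := by
    intro a
    rw [← hsumf]
    exact Finset.single_le_sum (fun b _ => hf0 b) (Finset.mem_univ a)
  have hgle : ∀ a, g a ≤ h := by
    intro a
    rw [← hsumg]
    exact Finset.single_le_sum (fun b _ => hg0 b) (Finset.mem_univ a)
  -- pointwise bounds
  have hPlb : ∀ a, pmin ≤ P a := fun a => hpmin ▸ Finset.inf'_le _ (Finset.mem_univ a)
  have hPub : ∀ a, P a ≤ pmax := fun a => hpmax ▸ Finset.le_sup' _ (Finset.mem_univ a)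
  have hRlb : ∀ a, rmin ≤ R a := fun a => hrmin ▸ Finset.inf'_le _ (Finset.mem_univ a)
  have hRub : ∀ a, R a ≤ rmax := fun a => hrmax ▸ Finset.le_sup' _ (Finset.mem_univ a)
  have hmlb : 0 < pmin - h := by rw [hh]; linarith
  have hrmaxpos : 0 < rmax := lt_of_lt_of_le hrminpos (le_trans (hRlb (Classical.arbitrary A)) (hRub _))
  have hmub : 0 < pmax + h := by
    have := lt_of_lt_of_le hpminpos (le_trans (hPlb (Classical.arbitrary A)) (hPub _))
    linarith
  have hQlb : ∀ a, pmin - h ≤ Q a := by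
    intro a
    have h1 : P a - Q a ≤ g a := le_max_left _ _
    have := hgle a
    have := hPlb a
    linarith
  have hQub : ∀ a, Q a ≤ pmax + h := by
    intro a
    have h1 : Q a - P a ≤ f a := le_max_left _ _
    have := hfle a
    have := hPub a
    linarith
  have hQpos : ∀ a, 0 < Q a := fun a => lt_of_lt_of_le hmlb (hQlb a)
  have hPpos : ∀ a, 0 < P a := fun a => lt_of_lt_of_le hpminpos (hPlb a)
  have hRpos : ∀ a, 0 < R a := fun a => lt_of_lt_of_le hrminpos (hRlb a)
  set Lmax := Real.logb 2 ((pmax + h) / rmin) with hLmax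
  set Lmin := Real.logb 2 ((pmin - h) / rmax) with hLmin
  -- termwise bound
  have key : ∀ a, Q a * Real.logb 2 (Q a / R a) - P a * Real.logb 2 (P a / R a) ≤
      f a * Lmax - g a * Lmin + (Q a - P a) / Real.log 2 := by
    intro a
    have hQR : 0 < Q a / R a := div_pos (hQpos a) (hRpos a)
    have hQP : 0 < Q a / P a := div_pos (hQpos a) (hPpos a)
    -- identity
    have hid : Q a * Real.logb 2 (Q a / R a) - P a * Real.logb 2 (P a / R a) =
        (f a - g a) * Real.logb 2 (Q a / R a) + P a * Real.logb 2 (Q a / P a) := by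
      rw [hfg_sub a, Real.logb_div (hQpos a).ne' (hRpos a).ne',
        Real.logb_div (hPpos a).ne' (hRpos a).ne',
        Real.logb_div (hQpos a).ne' (hPpos a).ne']
      ring
    rw [hid]
    have hbnd1 : Real.logb 2 (Q a / R a) ≤ Lmax := by
      rw [hLmax]
      apply Real.logb_le_logb_of_le one_lt_two hQR
      exact div_le_div₀ (le_of_lt hmub) (hQub a) hrminpos (hRlb a)
    have hbnd2 : Lmin ≤ Real.logb 2 (Q a / R a) := by
      rw [hLmin]
      apply Real.logb_le_logb_of_le one_lt_two (div_pos hmlb hrmaxpos)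
      exact div_le_div₀ (hQpos a).le (hQlb a) (hRpos a) (hRub a)
    have hA : (f a - g a) * Real.logb 2 (Q a / R a) ≤ f a * Lmax - g a * Lmin := by
      have h1 : f a * Real.logb 2 (Q a / R a) ≤ f a * Lmax :=
        mul_le_mul_of_nonneg_left hbnd1 (hf0 a)
      have h2 : g a * Lmin ≤ g a * Real.logb 2 (Q a / R a) :=
        mul_le_mul_of_nonneg_left hbnd2 (hg0 a)
      nlinarith
    have hB : P a * Real.logb 2 (Q a / P a) ≤ (Q a - P a) / Real.log 2 := by
      have hlog : Real.log (Q a / P a) ≤ Q a / P a - 1 := Real.log_le_sub_one_of_pos hQP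
      have : P a * Real.logb 2 (Q a / P a) = P a * Real.log (Q a / P a) / Real.log 2 := by
        rw [Real.logb]; ring
      rw [this]
      rw [div_le_div_iff_of_pos_right hlog2]
      calc P a * Real.log (Q a / P a) ≤ P a * (Q a / P a - 1) :=
            mul_le_mul_of_nonneg_left hlog (hPpos a).le
        _ = Q a - P a := by rw [mul_sub, mul_one, mul_div_cancel₀ _ (hPpos a).ne']
    linarith
  -- sum the termwise bound
  have hsum : (∑ a, Q a * Real.logb 2 (Q a / R a)) - (∑ a, P a * Real.logb 2 (P a / R a)) ≤
      h * Lmax - h * Lmin := by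
    rw [← Finset.sum_sub_distrib]
    calc ∑ a, (Q a * Real.logb 2 (Q a / R a) - P a * Real.logb 2 (P a / R a))
        ≤ ∑ a, (f a * Lmax - g a * Lmin + (Q a - P a) / Real.log 2) :=
          Finset.sum_le_sum fun a _ => key a
      _ = (∑ a, f a) * Lmax - (∑ a, g a) * Lmin +
          ((∑ a, Q a) - (∑ a, P a)) / Real.log 2 := by
          rw [Finset.sum_add_distrib, Finset.sum_sub_distrib, ← Finset.sum_mul,
            ← Finset.sum_mul, ← Finset.sum_div, Finset.sum_sub_distrib]
      _ = h * Lmax - h * Lmin := by rw [hsumf, hsumg, hP1, hQ1]; ring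
  refine le_trans hsum ?_
  -- final equality
  have hXY : ((pmax + h) / (pmin - h)) * (rmax / rmin) =
      ((pmax + h) / rmin) / ((pmin - h) / rmax) := by
    field_simp
  rw [hXY, Real.logb_div (div_pos hmub hrminpos).ne' (div_pos hmlb hrmaxpos).ne']
  rw [hLmax, hLmin]
  ring_nf
  rfl
end

section
/- Let Q be a pmf on a finite alphabet A, f : A → ℝ, and suppose f_min < I < E_f(Q), where f_min = min_{a ∈ supp(Q)} f(a). Then there exists τ > 0 such that the pmf P*(a) = Q(a) 2^{−τ f(a)} / Σ_b Q(b) 2^{−τ f(b)} satisfies E_f(P*) = I, and P* minimizes D(P‖Q) over all pmfs P on A with E_f(P) ≤ I. Moreover supp(P*) = supp(Q). -/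
open Finset Real

/-- Lemma 4: existence of a positive tilt τ such that the tilted pmf
P*(a) = Q(a)2^{−τf(a)}/Z meets E_f(P*) = I and minimizes D(·‖Q) over the
half-space {E_f(P) ≤ I}; moreover supp(P*) = supp(Q). -/
theorem tilted_minimizer_exists
    {A : Type*} [Fintype A] [Nonempty A]
    (Q : A → ℝ) (hQ0 : ∀ a, 0 ≤ Q a) (hQ1 : ∑ a, Q a = 1)
    (f : A → ℝ)
    (hne : (Finset.univ.filter (fun a => 0 < Q a)).Nonempty)
    (fmin : ℝ)
    (hfmin : fmin = (Finset.univ.filter (fun a => 0 < Q a)).inf' hne f)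
    (hnonconst : ∃ a b, 0 < Q a ∧ 0 < Q b ∧ f a ≠ f b)
    (I : ℝ) (hI1 : fmin < I) (hI2 : I < ∑ a, Q a * f a) :
    ∃ τ : ℝ, 0 < τ ∧
      ∃ Pstar : A → ℝ,
        (∀ a, Pstar a = Q a * (2 : ℝ) ^ (-(τ * f a)) /
            ∑ b, Q b * (2 : ℝ) ^ (-(τ * f b))) ∧
        (∑ a, Pstar a * f a = I) ∧
        (∀ P : A → ℝ, (∀ a, 0 ≤ P a) → (∑ a, P a = 1) →
          (∀ a, 0 < P a → 0 < Q a) → (∑ a, P a * f a ≤ I) →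
          (∑ a ∈ Finset.univ.filter (fun a => 0 < Pstar a),
              Pstar a * Real.logb 2 (Pstar a / Q a)) ≤
            ∑ a ∈ Finset.univ.filter (fun a => 0 < P a),
              P a * Real.logb 2 (P a / Q a)) ∧
        (∀ a, 0 < Pstar a ↔ 0 < Q a) := by
  classical
  obtain ⟨a₀, ha₀mem, ha₀f⟩ := Finset.exists_mem_eq_inf' hne f
  rw [Finset.mem_filter] at ha₀mem
  have ha₀Q : 0 < Q a₀ := ha₀mem.2
  have hfa₀ : fmin = f a₀ := by rw [hfmin, ha₀f]
  have hfminle : ∀ a, 0 < Q a → fmin ≤ f a := fun a ha => by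
    rw [hfmin]; exact Finset.inf'_le f (Finset.mem_filter.mpr ⟨Finset.mem_univ _, ha⟩)
  set S : ℝ → ℝ := fun τ => ∑ b, Q b * (2:ℝ) ^ (-(τ * f b)) with hSdef
  have hSpos : ∀ τ, 0 < S τ := fun τ =>
    Finset.sum_pos' (fun a _ => mul_nonneg (hQ0 a) (Real.rpow_pos_of_pos two_pos _).le)
      ⟨a₀, Finset.mem_univ _, mul_pos ha₀Q (Real.rpow_pos_of_pos two_pos _)⟩
  set N : ℝ → ℝ := fun τ => ∑ a, Q a * (2:ℝ) ^ (-(τ * f a)) * f a with hNdef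
  have hcontpow : ∀ c : ℝ, Continuous fun τ : ℝ => (2:ℝ) ^ (-(τ * c)) := fun c =>
    continuous_const.rpow (by continuity) fun x => Or.inl two_ne_zero
  have hScont : Continuous S :=
    continuous_finset_sum _ fun a _ => continuous_const.mul (hcontpow (f a))
  have hNcont : Continuous N :=
    continuous_finset_sum _ fun a _ => (continuous_const.mul (hcontpow (f a))).mul continuous_const
  set g : ℝ → ℝ := fun τ => N τ / S τ with hgdef
  have hgcont : Continuous g := hNcont.div hScont fun τ => (hSpos τ).ne'
  have hg0 : g 0 = ∑ a, Q a * f a := by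
    simp [hgdef, hNdef, hSdef, hQ1]
  -- the auxiliary function h and its limit
  set L : A → ℝ := fun a => if 0 < Q a ∧ f a = fmin then Q a * (fmin - I) else 0 with hLdef
  have hterm : ∀ a : A, Filter.Tendsto
      (fun T : ℝ => Q a * (2:ℝ) ^ (-(T * (f a - fmin))) * (f a - I)) Filter.atTop (nhds (L a)) := by
    intro a
    rcases eq_or_lt_of_le (hQ0 a) with hQa | hQa
    · have : (fun T : ℝ => Q a * (2:ℝ) ^ (-(T * (f a - fmin))) * (f a - I)) = fun _ => (0:ℝ) := by
        funext T; rw [← hQa]; ring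
      rw [this, hLdef]
      simp [← hQa]
    · rcases eq_or_ne (f a) fmin with hfa | hfa
      · have : (fun T : ℝ => Q a * (2:ℝ) ^ (-(T * (f a - fmin))) * (f a - I))
            = fun _ => Q a * (fmin - I) := by
          funext T; rw [hfa]; simp
        rw [this, hLdef]
        simp [hQa, hfa]
      · have hd : 0 < f a - fmin := by
          have := hfminle a hQa
          rcases lt_or_eq_of_le this with h | h
          · linarith
          · exact absurd h.symm hfa
        have h1 : Filter.Tendsto (fun T : ℝ => -(T * (f a - fmin))) Filter.atTop Filter.atBot :=
          (Filter.tendsto_neg_atTop_atBot).comp ((Filter.tendsto_id).atTop_mul_const hd)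
        have h2 : Filter.Tendsto (fun T : ℝ => (2:ℝ) ^ (-(T * (f a - fmin))))
            Filter.atTop (nhds 0) :=
          (tendsto_rpow_atBot_of_base_gt_one 2 one_lt_two).comp h1
        have h3 := (h2.const_mul (Q a)).mul_const (f a - I)
        rw [mul_zero, zero_mul] at h3
        have hL : L a = 0 := by rw [hLdef]; simp [hfa]
        rw [hL]; exact h3
  have hhtend : Filter.Tendsto (fun T : ℝ => ∑ a, Q a * (2:ℝ) ^ (-(T * (f a - fmin))) * (f a - I))
      Filter.atTop (nhds (∑ a, L a)) := tendsto_finset_sum _ fun a _ => hterm a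
  have hLneg : (∑ a, L a) < 0 := by
    have : ∑ a, L a < ∑ _a : A, (0:ℝ) := by
      apply Finset.sum_lt_sum
      · intro a _
        rw [hLdef]
        by_cases h : 0 < Q a ∧ f a = fmin
        · simp only [if_pos h]
          exact mul_nonpos_of_nonneg_of_nonpos (hQ0 a) (by linarith)
        · simp [h]
      · refine ⟨a₀, Finset.mem_univ _, ?_⟩
        have hLa : L a₀ = Q a₀ * (fmin - I) := by simp [hLdef, ha₀Q, hfa₀]
        rw [hLa]
        exact mul_neg_of_pos_of_neg ha₀Q (by linarith)
    simpa using this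
  have hev : ∀ᶠ T : ℝ in Filter.atTop,
      (∑ a, Q a * (2:ℝ) ^ (-(T * (f a - fmin))) * (f a - I)) < 0 :=
    hhtend.eventually_lt_const hLneg
  obtain ⟨T, hT0, hhT⟩ := ((Filter.eventually_gt_atTop (0:ℝ)).and hev).exists
  -- g T < I
  have hgT : g T < I := by
    have key : N T - I * S T = (2:ℝ) ^ (-(T * fmin)) *
        ∑ a, Q a * (2:ℝ) ^ (-(T * (f a - fmin))) * (f a - I) := by
      rw [hNdef, hSdef, Finset.mul_sum, Finset.mul_sum, ← Finset.sum_sub_distrib]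
      apply Finset.sum_congr rfl
      intro a _
      have : ((2:ℝ)) ^ (-(T * f a)) = (2:ℝ) ^ (-(T * fmin)) * (2:ℝ) ^ (-(T * (f a - fmin))) := by
        rw [← Real.rpow_add two_pos]; ring_nf
      rw [this]; ring
    have hneg : N T - I * S T < 0 := by
      rw [key]
      exact mul_neg_of_pos_of_neg (Real.rpow_pos_of_pos two_pos _) hhT
    rw [hgdef]
    rw [div_lt_iff₀ (hSpos T)]
    linarith
  -- IVT
  have hIicc : I ∈ Set.Icc (g T) (g 0) := ⟨le_of_lt hgT, le_of_lt (by rw [hg0]; exact hI2)⟩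
  obtain ⟨τ, hτmem, hgτ⟩ := intermediate_value_Icc' (le_of_lt hT0) hgcont.continuousOn hIicc
  have hτpos : 0 < τ := by
    rcases lt_or_eq_of_le hτmem.1 with h | h
    · exact h
    · exfalso; rw [← h] at hgτ; rw [hg0] at hgτ; linarith
  refine ⟨τ, hτpos, fun a => Q a * (2:ℝ) ^ (-(τ * f a)) / S τ, fun a => rfl, ?_, ?_, ?_⟩
  · -- expectation = I
    have : ∑ a, Q a * (2:ℝ) ^ (-(τ * f a)) / S τ * f a = N τ / S τ := by
      rw [hNdef, Finset.sum_div]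
      apply Finset.sum_congr rfl
      intro a _; ring
    rw [this]; exact hgτ
  · -- minimality
    intro P hP0 hP1 hPQ hPI
    set Pstar : A → ℝ := fun a => Q a * (2:ℝ) ^ (-(τ * f a)) / S τ with hPs
    have hPsnn : ∀ a, 0 ≤ Pstar a := fun a =>
      div_nonneg (mul_nonneg (hQ0 a) (Real.rpow_pos_of_pos two_pos _).le) (hSpos τ).le
    have hPsiff : ∀ a, 0 < Pstar a ↔ 0 < Q a := by
      intro a
      constructor
      · intro h
        by_contra hq
        have : Q a = 0 := le_antisymm (not_lt.mp hq) (hQ0 a)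
        rw [hPs] at h; simp [this] at h
      · intro h
        exact div_pos (mul_pos h (Real.rpow_pos_of_pos two_pos _)) (hSpos τ)
    have hPssum : ∑ a, Pstar a = 1 := by
      simp only [hPs]
      rw [← Finset.sum_div, div_self (hSpos τ).ne']
    have hPsEf : ∑ a, Pstar a * f a = I := by
      have : ∑ a, Pstar a * f a = N τ / S τ := by
        rw [hNdef, Finset.sum_div]
        apply Finset.sum_congr rfl
        intro a _; simp only [hPs]; ring
      rw [this]; exact hgτ
    -- sums over support equal sums over univ
    have hext : ∀ (w h : A → ℝ), (∀ a, 0 ≤ w a) →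
        ∑ a ∈ Finset.univ.filter (fun a => 0 < w a), w a * h a = ∑ a, w a * h a := by
      intro w h hw
      apply Finset.sum_subset (Finset.filter_subset _ _)
      intro a _ ha
      have : w a = 0 := le_antisymm (not_lt.mp (by simpa using ha)) (hw a)
      rw [this, zero_mul]
    have hextP : ∀ (w : A → ℝ), (∀ a, 0 ≤ w a) →
        ∑ a ∈ Finset.univ.filter (fun a => 0 < w a), w a = ∑ a, w a := by
      intro w hw
      apply Finset.sum_subset (Finset.filter_subset _ _)
      intro a _ ha
      exact le_antisymm (not_lt.mp (by simpa using ha)) (hw a)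
    have hCdef : ∀ a, 0 < Q a →
        Real.logb 2 (Pstar a / Q a) = -(τ * f a) - Real.logb 2 (S τ) := by
      intro a hQa
      have h1 : Pstar a / Q a = (2:ℝ) ^ (-(τ * f a)) / S τ := by
        have h0 : Pstar a = Q a * ((2:ℝ) ^ (-(τ * f a)) / S τ) := by
          simp only [hPs]; rw [mul_div_assoc]
        rw [h0, mul_comm, mul_div_assoc, div_self hQa.ne', mul_one]
      rw [h1, Real.logb_div (Real.rpow_pos_of_pos two_pos _).ne' (hSpos τ).ne',
        Real.logb_rpow two_pos (by norm_num)]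
    -- LHS value
    have hLHS : ∑ a ∈ Finset.univ.filter (fun a => 0 < Pstar a),
        Pstar a * Real.logb 2 (Pstar a / Q a) = -(τ * I) - Real.logb 2 (S τ) := by
      have h1 : ∀ a ∈ Finset.univ.filter (fun a => 0 < Pstar a),
          Pstar a * Real.logb 2 (Pstar a / Q a)
            = -(τ * (Pstar a * f a)) - Pstar a * Real.logb 2 (S τ) := by
        intro a ha
        rw [Finset.mem_filter] at ha
        rw [hCdef a ((hPsiff a).mp ha.2)]
        ring
      rw [Finset.sum_congr rfl h1, Finset.sum_sub_distrib]
      have h2 : ∑ a ∈ Finset.univ.filter (fun a => 0 < Pstar a), -(τ * (Pstar a * f a))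
          = -(τ * ∑ a ∈ Finset.univ.filter (fun a => 0 < Pstar a), Pstar a * f a) := by
        rw [Finset.mul_sum, ← Finset.sum_neg_distrib]
      rw [h2, hext Pstar f hPsnn, hPsEf, ← Finset.sum_mul, hextP Pstar hPsnn, hPssum, one_mul]
    rw [hLHS]
    -- RHS decomposition
    have hsPf : ∑ a ∈ Finset.univ.filter (fun a => 0 < P a), P a * f a = ∑ a, P a * f a :=
      hext P f hP0
    have hsP1 : ∑ a ∈ Finset.univ.filter (fun a => 0 < P a), P a = 1 := by
      rw [hextP P hP0, hP1]
    have hRHS : ∑ a ∈ Finset.univ.filter (fun a => 0 < P a), P a * Real.logb 2 (P a / Q a)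
        = (∑ a ∈ Finset.univ.filter (fun a => 0 < P a), P a * Real.logb 2 (P a / Pstar a))
          - τ * (∑ a, P a * f a) - Real.logb 2 (S τ) := by
      have h1 : ∀ a ∈ Finset.univ.filter (fun a => 0 < P a),
          P a * Real.logb 2 (P a / Q a)
            = P a * Real.logb 2 (P a / Pstar a) - τ * (P a * f a)
              - P a * Real.logb 2 (S τ) := by
        intro a ha
        rw [Finset.mem_filter] at ha
        have hPa : 0 < P a := ha.2
        have hQa : 0 < Q a := hPQ a hPa
        have hPsa : 0 < Pstar a := (hPsiff a).mpr hQa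
        have hsplit : P a / Q a = (P a / Pstar a) * (Pstar a / Q a) := by
          field_simp
        rw [hsplit, Real.logb_mul (div_pos hPa hPsa).ne' (div_pos hPsa hQa).ne',
          hCdef a hQa]
        ring
      rw [Finset.sum_congr rfl h1, Finset.sum_sub_distrib, Finset.sum_sub_distrib,
        ← Finset.sum_mul, hsP1, one_mul, ← Finset.mul_sum, hsPf]
    rw [hRHS]
    -- Gibbs inequality
    have hGibbs : 0 ≤ ∑ a ∈ Finset.univ.filter (fun a => 0 < P a),
        P a * Real.logb 2 (P a / Pstar a) := by
      have hlog : 0 ≤ ∑ a ∈ Finset.univ.filter (fun a => 0 < P a),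
          P a * Real.log (P a / Pstar a) := by
        have hstep : ∑ a ∈ Finset.univ.filter (fun a => 0 < P a), (P a - Pstar a)
            ≤ ∑ a ∈ Finset.univ.filter (fun a => 0 < P a), P a * Real.log (P a / Pstar a) := by
          apply Finset.sum_le_sum
          intro a ha
          rw [Finset.mem_filter] at ha
          have hPa : 0 < P a := ha.2
          have hPsa : 0 < Pstar a := (hPsiff a).mpr (hPQ a hPa)
          have h1 : Real.log (Pstar a / P a) ≤ Pstar a / P a - 1 :=
            Real.log_le_sub_one_of_pos (div_pos hPsa hPa)
          have hlg : Real.log (Pstar a / P a) = - Real.log (P a / Pstar a) := by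
            rw [← Real.log_inv, inv_div]
          have h2 : 1 - Pstar a / P a ≤ Real.log (P a / Pstar a) := by
            rw [hlg] at h1
            linarith
          have h3 : P a * (1 - Pstar a / P a) ≤ P a * Real.log (P a / Pstar a) :=
            mul_le_mul_of_nonneg_left h2 hPa.le
          have h4 : P a * (1 - Pstar a / P a) = P a - Pstar a := by
            field_simp
          linarith
        have hsub : ∑ a ∈ Finset.univ.filter (fun a => 0 < P a), Pstar a ≤ 1 := by
          rw [← hPssum]
          exact Finset.sum_le_sum_of_subset_of_nonneg (Finset.filter_subset _ _)
            (fun a _ _ => hPsnn a)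
        have : (0:ℝ) ≤ ∑ a ∈ Finset.univ.filter (fun a => 0 < P a), (P a - Pstar a) := by
          rw [Finset.sum_sub_distrib, hsP1]
          linarith
        linarith
      have : ∑ a ∈ Finset.univ.filter (fun a => 0 < P a), P a * Real.logb 2 (P a / Pstar a)
          = (∑ a ∈ Finset.univ.filter (fun a => 0 < P a), P a * Real.log (P a / Pstar a))
            / Real.log 2 := by
        rw [Finset.sum_div]
        apply Finset.sum_congr rfl
        intro a _
        rw [Real.logb, mul_div_assoc]
      rw [this]
      exact div_nonneg hlog (Real.log_nonneg one_le_two)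
    have hτI : τ * (∑ a, P a * f a) ≤ τ * I := mul_le_mul_of_nonneg_left hPI hτpos.le
    linarith
  · -- support
    intro a
    constructor
    · intro h
      by_contra hq
      have : Q a = 0 := le_antisymm (not_lt.mp hq) (hQ0 a)
      simp [this] at h
    · intro h
      exact div_pos (mul_pos h (Real.rpow_pos_of_pos two_pos _)) (hSpos τ)
end

section
/- (Pythagorean inequality for exponentially tilted minimizers) Let Q be a pmf on finite A, f : A → ℝ, and let P*(a) = Q(a)2^{−τ f(a)}/Z with τ > 0 and E_f(P*) = I. Then for every pmf P with E_f(P) ≤ I and supp(P) ⊆ supp(Q): D(P‖Q) ≥ D(P‖P*) + D(P*‖Q); in particular D(P‖P*) ≤ D(P‖Q) − D(P*‖Q). -/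
open Finset Real

/-- Pythagorean inequality for the exponentially tilted minimizer:
D(P‖Q) ≥ D(P‖P*) + D(P*‖Q) for any pmf P with E_f(P) ≤ I and supp(P) ⊆ supp(Q). -/
theorem pythagorean_inequality_tilted
    {A : Type*} [Fintype A]
    (Q : A → ℝ) (hQ0 : ∀ a, 0 ≤ Q a) (hQ1 : ∑ a, Q a = 1)
    (f : A → ℝ) (τ : ℝ) (hτ : 0 < τ)
    (Z : ℝ) (hZ : Z = ∑ b, Q b * (2 : ℝ) ^ (-(τ * f b)))
    (Pstar : A → ℝ)
    (hPstar : ∀ a, Pstar a = Q a * (2 : ℝ) ^ (-(τ * f a)) / Z)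
    (I : ℝ) (hI : ∑ a, Pstar a * f a = I)
    (P : A → ℝ) (hP0 : ∀ a, 0 ≤ P a) (hP1 : ∑ a, P a = 1)
    (hEf : ∑ a, P a * f a ≤ I)
    (hsupp : ∀ a, 0 < P a → 0 < Q a) :
    (∑ a ∈ Finset.univ.filter (fun a => 0 < P a), P a * Real.logb 2 (P a / Pstar a)) +
      (∑ a ∈ Finset.univ.filter (fun a => 0 < Pstar a),
        Pstar a * Real.logb 2 (Pstar a / Q a)) ≤
      ∑ a ∈ Finset.univ.filter (fun a => 0 < P a), P a * Real.logb 2 (P a / Q a) := by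
  have h2 : ∀ x : ℝ, (0:ℝ) < (2:ℝ) ^ x := fun x => Real.rpow_pos_of_pos (by norm_num) x
  have hZpos : 0 < Z := by
    rw [hZ]
    obtain ⟨b, hb⟩ : ∃ b, 0 < Q b := by
      by_contra h
      push_neg at h
      have h0 : ∀ a, Q a = 0 := fun a => le_antisymm (h a) (hQ0 a)
      simp [h0] at hQ1
    exact Finset.sum_pos' (fun a _ => mul_nonneg (hQ0 a) (h2 _).le)
      ⟨b, Finset.mem_univ b, mul_pos hb (h2 _)⟩
  have hPs0 : ∀ a, 0 ≤ Pstar a := fun a => by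
    rw [hPstar]; exact div_nonneg (mul_nonneg (hQ0 a) (h2 _).le) hZpos.le
  -- key log identity
  have hkey : ∀ a, 0 < Q a → Real.logb 2 (Pstar a / Q a) = -(τ * f a) - Real.logb 2 Z := by
    intro a ha
    have hpq : Pstar a / Q a = (2:ℝ) ^ (-(τ * f a)) / Z := by
      rw [hPstar]; field_simp
    rw [hpq, Real.logb_div (h2 _).ne' hZpos.ne',
      Real.logb_rpow (by norm_num) (by norm_num)]
  -- Pstar positive iff Q positive
  have hPsQ : ∀ a, 0 < Pstar a → 0 < Q a := by
    intro a ha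
    by_contra h
    have : Q a = 0 := le_antisymm (not_lt.mp h) (hQ0 a)
    rw [hPstar, this] at ha; simp at ha
  -- sums over support equal full sums
  have hsumPf : ∑ a ∈ Finset.univ.filter (fun a => 0 < P a), P a * f a = ∑ a, P a * f a := by
    apply Finset.sum_subset (Finset.filter_subset _ _)
    intro a _ ha
    have : P a = 0 := le_antisymm (not_lt.mp (by simpa using ha)) (hP0 a)
    simp [this]
  have hsumP : ∑ a ∈ Finset.univ.filter (fun a => 0 < P a), P a = 1 := by
    rw [← hP1]
    apply Finset.sum_subset (Finset.filter_subset _ _)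
    intro a _ ha
    exact le_antisymm (not_lt.mp (by simpa using ha)) (hP0 a)
  have hsumPsf : ∑ a ∈ Finset.univ.filter (fun a => 0 < Pstar a), Pstar a * f a = I := by
    rw [← hI]
    apply Finset.sum_subset (Finset.filter_subset _ _)
    intro a _ ha
    have : Pstar a = 0 := le_antisymm (not_lt.mp (by simpa using ha)) (hPs0 a)
    simp [this]
  have hsumPs : ∑ a ∈ Finset.univ.filter (fun a => 0 < Pstar a), Pstar a = 1 := by
    have h1 : ∑ a, Pstar a = 1 := by
      simp only [hPstar, ← Finset.sum_div, ← hZ]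
      exact div_self hZpos.ne'
    rw [← h1]
    apply Finset.sum_subset (Finset.filter_subset _ _)
    intro a _ ha
    exact le_antisymm (not_lt.mp (by simpa using ha)) (hPs0 a)
  -- middle term value
  have hB : (∑ a ∈ Finset.univ.filter (fun a => 0 < Pstar a),
      Pstar a * Real.logb 2 (Pstar a / Q a)) = -(τ * I) - Real.logb 2 Z := by
    have : ∀ a ∈ Finset.univ.filter (fun a => 0 < Pstar a),
        Pstar a * Real.logb 2 (Pstar a / Q a)
          = -τ * (Pstar a * f a) - Real.logb 2 Z * Pstar a := by
      intro a ha
      rw [hkey a (hPsQ a (by simpa using ha))]; ring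
    rw [Finset.sum_congr rfl this, Finset.sum_sub_distrib, ← Finset.mul_sum, ← Finset.mul_sum,
      hsumPsf, hsumPs]
    ring
  -- rewrite the RHS sum
  have hC : (∑ a ∈ Finset.univ.filter (fun a => 0 < P a), P a * Real.logb 2 (P a / Q a))
      = (∑ a ∈ Finset.univ.filter (fun a => 0 < P a), P a * Real.logb 2 (P a / Pstar a))
        + (-(τ * ∑ a, P a * f a) - Real.logb 2 Z) := by
    have : ∀ a ∈ Finset.univ.filter (fun a => 0 < P a),
        P a * Real.logb 2 (P a / Q a)
          = P a * Real.logb 2 (P a / Pstar a) + (-τ * (P a * f a) - Real.logb 2 Z * P a) := by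
      intro a ha
      have hPa : 0 < P a := by simpa using ha
      have hQa : 0 < Q a := hsupp a hPa
      have hPsa : 0 < Pstar a := by
        rw [hPstar]; exact div_pos (mul_pos hQa (h2 _)) hZpos
      rw [Real.logb_div hPa.ne' hQa.ne', Real.logb_div hPa.ne' hPsa.ne',
        show Real.logb 2 (Pstar a) = Real.logb 2 (Pstar a / Q a) + Real.logb 2 (Q a) by
          rw [Real.logb_div hPsa.ne' hQa.ne']; ring,
        hkey a hQa]
      ring
    rw [Finset.sum_congr rfl this, Finset.sum_add_distrib, Finset.sum_sub_distrib,
      ← Finset.mul_sum, ← Finset.mul_sum, hsumPf, hsumP]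
    ring
  rw [hC, hB]
  have := mul_le_mul_of_nonneg_left hEf hτ.le
  linarith
end

section
/- Let A = {1,…,L} and n ≥ 1. For every pmf Q_T on A there exists an n-type pmf P (all values integer multiples of 1/n) such that the ℓ1 distance satisfies Σ_i |P(i) − Q_T(i)| ≤ L/(2n). -/
open Finset

/-- For any real-valued function on `Fin L` and any `Δ ≤ L`, there is a set of
`Δ` coordinates on which `r` dominates the rest. -/
lemma exists_top_set {L : ℕ} (r : Fin L → ℝ) :
    ∀ Δ : ℕ, Δ ≤ L → ∃ S : Finset (Fin L), S.card = Δ ∧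
      ∀ i ∈ S, ∀ j, j ∉ S → r j ≤ r i := by
  intro Δ
  induction Δ with
  | zero => intro _; exact ⟨∅, rfl, by simp⟩
  | succ d ih =>
    intro h
    obtain ⟨S, hcard, hprop⟩ := ih (Nat.le_of_succ_le h)
    have hne : Sᶜ.Nonempty := by
      rw [← Finset.card_pos, Finset.card_compl, hcard]
      simp only [Fintype.card_fin]
      omega
    obtain ⟨j, hjmem, hjmax⟩ := Sᶜ.exists_max_image r hne
    refine ⟨insert j S, ?_, ?_⟩
    · rw [Finset.card_insert_of_notMem (Finset.mem_compl.mp hjmem), hcard]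
    · intro i hi k hk
      rcases Finset.mem_insert.mp hi with h1 | h2
      · subst h1
        exact hjmax k (Finset.mem_compl.mpr
          (fun hkS => hk (Finset.mem_insert_of_mem hkS)))
      · exact hprop i h2 k (fun hkS => hk (Finset.mem_insert_of_mem hkS))

/-- Quantization of a pmf to an n-type with ℓ1 error at most L/(2n). -/
theorem ntype_quantization_l1
    (L n : ℕ) (hL : 1 ≤ L) (hn : 1 ≤ n)
    (QT : Fin L → ℝ) (hQT0 : ∀ i, 0 ≤ QT i) (hQT1 : ∑ i, QT i = 1) :
    ∃ P : Fin L → ℝ,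
      (∀ i, 0 ≤ P i) ∧ (∑ i, P i = 1) ∧
      (∀ i, ∃ k : ℕ, P i = (k : ℝ) / n) ∧
      (∑ i, |P i - QT i| ≤ (L : ℝ) / (2 * n)) := by
  classical
  have hnpos : (0:ℝ) < n := by exact_mod_cast hn
  have hLpos : (0:ℝ) < L := by exact_mod_cast hL
  set f : Fin L → ℝ := fun i => n * QT i with hf
  set m : Fin L → ℤ := fun i => ⌊f i⌋ with hm
  set r : Fin L → ℝ := fun i => f i - m i with hr
  have hf0 : ∀ i, 0 ≤ f i := fun i => mul_nonneg (le_of_lt hnpos) (hQT0 i)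
  have hm0 : ∀ i, 0 ≤ m i := fun i => Int.floor_nonneg.mpr (hf0 i)
  have hr0 : ∀ i, 0 ≤ r i := fun i => sub_nonneg.mpr (Int.floor_le _)
  have hr1 : ∀ i, r i < 1 := fun i => by
    have := Int.lt_floor_add_one (f i)
    simp only [hr]
    linarith
  have hfsum : ∑ i, f i = n := by
    simp only [hf, ← Finset.mul_sum, hQT1, mul_one]
  -- the integer deficit Δ
  set Δℤ : ℤ := (n : ℤ) - ∑ i, m i with hΔdef
  have hrsum : ∑ i, r i = (Δℤ : ℝ) := by
    simp only [hr, Finset.sum_sub_distrib, hfsum, hΔdef]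
    push_cast
    ring
  have hΔ0 : 0 ≤ Δℤ := by
    have h1 : (0:ℝ) ≤ ∑ i, r i := Finset.sum_nonneg fun i _ => hr0 i
    rw [hrsum] at h1
    exact_mod_cast h1
  have hΔL : Δℤ < L := by
    have h1 : ∑ i, r i < ∑ _i : Fin L, (1:ℝ) := by
      apply Finset.sum_lt_sum_of_nonempty
      · exact Finset.univ_nonempty_iff.mpr ⟨⟨0, hL⟩⟩
      · intro i _; exact hr1 i
    simp only [Finset.sum_const, Finset.card_univ, Fintype.card_fin,
      nsmul_eq_mul, mul_one] at h1
    rw [hrsum] at h1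
    exact_mod_cast h1
  set Δ : ℕ := Δℤ.toNat with hΔ
  have hΔcast : (Δ : ℤ) = Δℤ := Int.toNat_of_nonneg hΔ0
  have hΔle : Δ ≤ L := by omega
  obtain ⟨S, hScard, hSprop⟩ := exists_top_set r Δ hΔle
  have hΔreal : (Δ : ℝ) = (Δℤ : ℝ) := by exact_mod_cast hΔcast
  -- key inequality: Δ² ≤ L * ∑_{i ∈ S} r i
  set s : ℝ := ∑ i ∈ S, r i with hs
  have hcompl : ∑ i ∈ Sᶜ, r i = (Δ:ℝ) - s := by
    have := Finset.sum_add_sum_compl S r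
    rw [hrsum, ← hΔreal] at this
    linarith
  have hkey : (Δ:ℝ)^2 ≤ L * s := by
    have h1 : ∀ j ∈ Sᶜ, (Δ:ℝ) * r j ≤ s := by
      intro j hj
      have : ∑ _i ∈ S, r j ≤ ∑ i ∈ S, r i :=
        Finset.sum_le_sum fun i hi => hSprop i hi j (Finset.mem_compl.mp hj)
      simpa [hScard, mul_comm] using this
    have h2 : ∑ j ∈ Sᶜ, (Δ:ℝ) * r j ≤ ∑ _j ∈ Sᶜ, s :=
      Finset.sum_le_sum h1
    have hcc : (Sᶜ.card : ℝ) = (L:ℝ) - Δ := by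
      rw [Finset.card_compl, hScard]
      have : (Fintype.card (Fin L)) = L := Fintype.card_fin L
      rw [this]
      push_cast [Nat.cast_sub hΔle]
      ring
    rw [← Finset.mul_sum, hcompl, Finset.sum_const, nsmul_eq_mul, hcc] at h2
    nlinarith [h2]
  -- define P
  refine ⟨fun i => ((m i + if i ∈ S then 1 else 0 : ℤ) : ℝ) / n, ?_, ?_, ?_, ?_⟩
  · intro i
    apply div_nonneg _ (le_of_lt hnpos)
    have h' : (0:ℝ) ≤ (m i : ℝ) := by exact_mod_cast hm0 i
    split <;> push_cast <;> linarith
  · rw [← Finset.sum_div]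
    rw [div_eq_one_iff_eq (ne_of_gt hnpos)]
    have : ∑ i, ((m i + if i ∈ S then 1 else 0 : ℤ) : ℝ)
        = ((∑ i, (m i + if i ∈ S then 1 else 0) : ℤ) : ℝ) := by push_cast; rfl
    rw [this]
    have hsum : (∑ i, (m i + if i ∈ S then 1 else 0) : ℤ) = n := by
      rw [Finset.sum_add_distrib]
      have : (∑ i, (if i ∈ S then (1:ℤ) else 0)) = S.card := by
        simp [Finset.sum_ite_mem]
      rw [this, hScard, hΔcast]
      omega
    rw [hsum]
    simp
  · intro i
    refine ⟨(m i + if i ∈ S then 1 else 0).toNat, ?_⟩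
    have hnn : 0 ≤ m i + if i ∈ S then 1 else 0 := by
      have := hm0 i; split <;> omega
    have hcast : (((m i + if i ∈ S then 1 else 0).toNat : ℕ) : ℝ)
        = ((m i + if i ∈ S then 1 else 0 : ℤ) : ℝ) := by
      exact_mod_cast congrArg (fun z : ℤ => (z : ℝ)) (Int.toNat_of_nonneg hnn)
    rw [hcast]
  · have habs : ∀ i, |((m i + if i ∈ S then 1 else 0 : ℤ) : ℝ) / n - QT i|
        = (if i ∈ S then 1 - r i else r i) / n := by
      intro i
      have hri0 := hr0 i
      have hri1 := hr1 i
      have hfi : (n:ℝ) * QT i = (m i : ℝ) + r i := by simp [hr, hf]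
      have hq : QT i = ((m i : ℝ) + r i) / n := by
        rw [← hfi]; field_simp
      rw [hq]
      by_cases hiS : i ∈ S
      · simp only [hiS, if_true]
        push_cast
        have heq : ((m i : ℝ) + 1) / n - ((m i : ℝ) + r i) / n = (1 - r i) / n := by
          ring
        rw [heq, abs_of_nonneg (div_nonneg (by linarith) hnpos.le)]
      · simp only [hiS, if_false]
        push_cast
        have heq : ((m i : ℝ) + 0) / n - ((m i : ℝ) + r i) / n = -(r i / n) := by
          ring
        rw [heq, abs_neg, abs_of_nonneg (div_nonneg hri0 hnpos.le)]
    calc ∑ i, |((m i + if i ∈ S then 1 else 0 : ℤ) : ℝ) / n - QT i|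
        = (∑ i, (if i ∈ S then 1 - r i else r i)) / n := by
          rw [Finset.sum_div]
          exact Finset.sum_congr rfl fun i _ => habs i
      _ ≤ ((L:ℝ) / 2) / n := by
          gcongr
          have hsplit : ∑ i, (if i ∈ S then 1 - r i else r i)
              = ∑ i ∈ S, (1 - r i) + ∑ i ∈ Sᶜ, r i := by
            rw [← Finset.sum_filter_add_sum_filter_not Finset.univ (· ∈ S)]
            congr 1
            · rw [Finset.filter_mem_eq_inter, Finset.univ_inter]
              exact Finset.sum_congr rfl fun i hi => by simp [hi]
            · have : Finset.filter (fun i => ¬ i ∈ S) Finset.univ = Sᶜ := by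
                ext i; simp
              rw [this]
              exact Finset.sum_congr rfl fun i hi => by
                simp [Finset.mem_compl.mp hi]
          rw [hsplit, Finset.sum_sub_distrib, Finset.sum_const, hScard,
            nsmul_eq_mul, mul_one, hcompl, ← hs]
          nlinarith [hkey, hLpos, sq_nonneg ((L:ℝ) - 2*Δ)]
      _ = (L : ℝ) / (2 * n) := by ring
end

section
/- Let Q be a full-support pmf on a finite alphabet A, f : A → ℝ, τ > 0, and P* the tilted pmf with E_f(P*) = I. Viewing the minimum divergence D(I) = D(P*(I) ‖ Q) as a function of the threshold I on the interval (f_min, E_f(Q)), D is differentiable with derivative dD/dI = −τ(I) < 0; in particular D(I) is strictly decreasing in I. -/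
/-!
Write `P_t ∝ Q · 2^(-t f)` for the tilted law, `Z t` for its normalizer and `m t = E_{P_t}[f]`.
Then `D(P_t ‖ Q) = -t m(t) - log₂ Z(t)`, and since `(log₂ Z)' = -m`, its derivative in `t` is
`-t m'(t)`, while `m'(t) = -ln 2 · Var_{P_t}(f) < 0`. So `m` is a strictly decreasing
differentiable map, `τ` is its inverse on `(f_min, E_Q f)`, and the chain rule gives
`dD/dI = -τ m'(τ) / m'(τ) = -τ`.
-/

open Finset Real Set Filter Topology

theorem Finset.sq_sum_mul_lt_sum_mul_sum_mul_sq {ι : Type*} {s : Finset ι} {w x : ι → ℝ}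
    (hw : ∀ i ∈ s, 0 < w i) (hx : ∃ i ∈ s, ∃ j ∈ s, x i ≠ x j) :
    (∑ i ∈ s, w i * x i) ^ 2 < (∑ i ∈ s, w i) * ∑ i ∈ s, w i * x i ^ 2 := by
  obtain ⟨i, hi, j, hj, hij⟩ := hx
  have hW : 0 < ∑ i ∈ s, w i := sum_pos hw ⟨i, hi⟩
  set c := (∑ i ∈ s, w i * x i) / ∑ i ∈ s, w i
  have hspread : 0 < ∑ k ∈ s, w k * (x k - c) ^ 2 := by
    obtain ⟨k, hk, hkc⟩ : ∃ k ∈ s, x k ≠ c := by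
      by_contra! h
      exact hij ((h i hi).trans (h j hj).symm)
    have hkc' := sub_ne_zero.2 hkc
    exact sum_pos' (fun l hl => mul_nonneg (hw l hl).le (sq_nonneg _))
      ⟨k, hk, mul_pos (hw k hk) (by positivity)⟩
  have hexpand : ∑ k ∈ s, w k * (x k - c) ^ 2 =
      ∑ k ∈ s, w k * x k ^ 2 - (∑ i ∈ s, w i * x i) ^ 2 / ∑ i ∈ s, w i := by
    have hsq : ∀ k, w k * (x k - c) ^ 2 = w k * x k ^ 2 - 2 * c * (w k * x k) + c ^ 2 * w k :=
      fun k => by ring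
    simp only [hsq, sum_add_distrib, sum_sub_distrib, ← mul_sum, c]
    field_simp
    ring
  rw [hexpand, sub_pos, div_lt_iff₀ hW] at hspread
  linarith

theorem StrictAnti.continuousAt_of_rightInvOn {m τ : ℝ → ℝ} {U : Set ℝ} (hanti : StrictAnti m)
    (hm : Continuous m) (hU : IsOpen U) (hτ : RightInvOn τ m U) {I : ℝ} (hI : I ∈ U) :
    ContinuousAt τ I := by
  have hmono : MonotoneOn (fun J => -τ J) U := fun J hJ K hK hJK => by
    rw [neg_le_neg_iff, ← hanti.le_iff_ge, hτ hJ, hτ hK]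
    exact hJK
  have himage : (fun s => m (-s)) ⁻¹' U ⊆ (fun J => -τ J) '' U := fun s hs =>
    ⟨m (-s), hs, by simp only [hanti.injective (hτ hs), neg_neg]⟩
  have hopen : IsOpen ((fun s => m (-s)) ⁻¹' U) := hU.preimage (by fun_prop)
  have hnhds : (fun J => -τ J) '' U ∈ 𝓝 (-τ I) :=
    mem_of_superset (hopen.mem_nhds (by simpa [neg_neg, hτ hI] using hI)) himage
  simpa only [neg_neg] using
    (continuousAt_of_monotoneOn_of_image_mem_nhds hmono (hU.mem_nhds hI) hnhds).fun_neg

section Tilt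

variable {A : Type*} [Fintype A] (Q f : A → ℝ)

/-- Unnormalized: the `k`-th moment of `f` under `tilt Q f t` is
`tiltMoment Q f k t / tiltMoment Q f 0 t`. -/
noncomputable def tiltMoment (k : ℕ) (t : ℝ) : ℝ := ∑ a, Q a * f a ^ k * (2 : ℝ) ^ (-(t * f a))

noncomputable def tilt (t : ℝ) (a : A) : ℝ := Q a * (2 : ℝ) ^ (-(t * f a)) / tiltMoment Q f 0 t

noncomputable def tiltMean (t : ℝ) : ℝ := tiltMoment Q f 1 t / tiltMoment Q f 0 t

noncomputable def tiltVariance (t : ℝ) : ℝ :=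
  tiltMoment Q f 2 t / tiltMoment Q f 0 t - tiltMean Q f t ^ 2

noncomputable def tiltDivergence (t : ℝ) : ℝ := ∑ a, tilt Q f t a * logb 2 (tilt Q f t a / Q a)

theorem hasDerivAt_tiltMoment (k : ℕ) (t : ℝ) :
    HasDerivAt (tiltMoment Q f k) (-log 2 * tiltMoment Q f (k + 1) t) t := by
  have hterm (a : A) : HasDerivAt (fun t => Q a * f a ^ k * (2 : ℝ) ^ (-(t * f a)))
      (Q a * f a ^ k * (log 2 * -f a * (2 : ℝ) ^ (-(t * f a)))) t :=
    (((hasDerivAt_mul_const (f a)).neg).const_rpow two_pos).const_mul _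
  refine (HasDerivAt.fun_sum fun a _ => hterm a).congr_deriv ?_
  simp only [tiltMoment, mul_sum]
  exact sum_congr rfl fun a _ => by ring

theorem tiltMoment_zero (t : ℝ) : tiltMoment Q f 0 t = ∑ a, Q a * (2 : ℝ) ^ (-(t * f a)) := by
  simp only [tiltMoment, pow_zero, mul_one]

variable {Q}

theorem tiltMoment_zero_pos [Nonempty A] (hQ : ∀ a, 0 < Q a) (t : ℝ) : 0 < tiltMoment Q f 0 t :=
  sum_pos (fun a _ => by
    rw [pow_zero, mul_one]; exact mul_pos (hQ a) (rpow_pos_of_pos two_pos _)) univ_nonempty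

theorem sum_tilt [Nonempty A] (hQ : ∀ a, 0 < Q a) (t : ℝ) : ∑ a, tilt Q f t a = 1 := by
  simp only [tilt]
  rw [← sum_div, ← tiltMoment_zero, div_self (tiltMoment_zero_pos f hQ t).ne']

theorem sum_tilt_mul (t : ℝ) : ∑ a, tilt Q f t a * f a = tiltMean Q f t := by
  simp only [tilt, tiltMean, tiltMoment, sum_div]
  exact sum_congr rfl fun a _ => by ring

theorem tiltDivergence_eq [Nonempty A] (hQ : ∀ a, 0 < Q a) (t : ℝ) :
    tiltDivergence Q f t = -(t * tiltMean Q f t) - logb 2 (tiltMoment Q f 0 t) := by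
  have hZ := tiltMoment_zero_pos f hQ t
  have hlog (a : A) : logb 2 (tilt Q f t a / Q a) = -(t * f a) - logb 2 (tiltMoment Q f 0 t) := by
    rw [tilt, mul_div_assoc, mul_div_right_comm, div_self (hQ a).ne', one_mul,
      logb_div (by positivity) hZ.ne', logb_rpow two_pos (by norm_num)]
  simp only [tiltDivergence, hlog, mul_sub, sum_sub_distrib, ← sum_mul, sum_tilt f hQ, one_mul,
    ← sum_tilt_mul]
  rw [mul_sum, ← sum_neg_distrib]
  congr 1
  exact sum_congr rfl fun a _ => by ring

theorem hasDerivAt_tiltMean [Nonempty A] (hQ : ∀ a, 0 < Q a) (t : ℝ) :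
    HasDerivAt (tiltMean Q f) (-log 2 * tiltVariance Q f t) t := by
  have hZ := (tiltMoment_zero_pos f hQ t).ne'
  refine ((hasDerivAt_tiltMoment Q f 1 t).div (hasDerivAt_tiltMoment Q f 0 t) hZ).congr_deriv ?_
  simp only [tiltVariance, tiltMean]
  field_simp
  ring

theorem tiltVariance_pos [Nonempty A] (hQ : ∀ a, 0 < Q a) (hf : ∃ a b, f a ≠ f b) (t : ℝ) :
    0 < tiltVariance Q f t := by
  have hZ := tiltMoment_zero_pos f hQ t
  obtain ⟨a, b, hab⟩ := hf
  have hCS := sq_sum_mul_lt_sum_mul_sum_mul_sq (s := univ) (x := f)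
    (fun a _ => mul_pos (hQ a) (rpow_pos_of_pos two_pos (-(t * f a))))
    ⟨a, mem_univ a, b, mem_univ b, hab⟩
  have hM1 : ∑ a, Q a * (2 : ℝ) ^ (-(t * f a)) * f a = tiltMoment Q f 1 t :=
    sum_congr rfl fun a _ => by ring
  have hM2 : ∑ a, Q a * (2 : ℝ) ^ (-(t * f a)) * f a ^ 2 = tiltMoment Q f 2 t :=
    sum_congr rfl fun a _ => by ring
  rw [hM1, hM2, ← tiltMoment_zero] at hCS
  rw [tiltVariance, tiltMean, div_pow, sub_pos, div_lt_div_iff₀ (by positivity) (by positivity)]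
  nlinarith

theorem strictAnti_tiltMean [Nonempty A] (hQ : ∀ a, 0 < Q a) (hf : ∃ a b, f a ≠ f b) :
    StrictAnti (tiltMean Q f) :=
  strictAnti_of_hasDerivAt_neg (hasDerivAt_tiltMean f hQ)
    fun t => mul_neg_of_neg_of_pos (neg_neg_of_pos (log_pos one_lt_two))
      (tiltVariance_pos f hQ hf t)

theorem hasDerivAt_tiltDivergence [Nonempty A] (hQ : ∀ a, 0 < Q a) (t : ℝ) :
    HasDerivAt (tiltDivergence Q f) (t * log 2 * tiltVariance Q f t) t := by
  have hZ := tiltMoment_zero_pos f hQ t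
  rw [funext (tiltDivergence_eq f hQ)]
  have hlogZ := ((hasDerivAt_tiltMoment Q f 0 t).log hZ.ne').div_const (log 2)
  simp only [logb]
  refine (((hasDerivAt_id t).mul (hasDerivAt_tiltMean f hQ t)).neg.sub hlogZ).congr_deriv ?_
  simp only [tiltMean, id]
  field_simp
  ring

end Tilt

theorem minimum_divergence_derivative_general
    {A : Type*} [Fintype A] [Nonempty A]
    (Q : A → ℝ) (hQ0 : ∀ a, 0 < Q a)
    (f : A → ℝ) (hnonconst : ∃ a b, f a ≠ f b)
    (fmin : ℝ)
    (τ : ℝ → ℝ)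
    (hτpos : ∀ I ∈ Set.Ioo fmin (∑ a, Q a * f a), 0 < τ I)
    (Pstar : ℝ → A → ℝ)
    (hPstar : ∀ I a, Pstar I a = Q a * (2 : ℝ) ^ (-(τ I * f a)) /
        ∑ b, Q b * (2 : ℝ) ^ (-(τ I * f b)))
    (hPstarI : ∀ I ∈ Set.Ioo fmin (∑ a, Q a * f a), ∑ a, Pstar I a * f a = I)
    (D : ℝ → ℝ)
    (hD : ∀ I, D I = ∑ a, Pstar I a * Real.logb 2 (Pstar I a / Q a)) :
    (∀ I ∈ Set.Ioo fmin (∑ a, Q a * f a), HasDerivAt D (-(τ I)) I) ∧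
    StrictAntiOn D (Set.Ioo fmin (∑ a, Q a * f a)) := by
  set U := Ioo fmin (∑ a, Q a * f a)
  have hP (I : ℝ) : Pstar I = tilt Q f (τ I) := funext fun a => by
    rw [hPstar, tilt, tiltMoment_zero]
  have hDτ : D = tiltDivergence Q f ∘ τ := funext fun I => by rw [hD, hP]; rfl
  have hτ : RightInvOn τ (tiltMean Q f) U := fun I hI => by
    rw [← sum_tilt_mul, ← hP, hPstarI I hI]
  have hmean := hasDerivAt_tiltMean f hQ0
  have hderiv : ∀ I ∈ U, HasDerivAt D (-τ I) I := by
    intro I hI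
    have hτ_cont := (strictAnti_tiltMean f hQ0 hnonconst).continuousAt_of_rightInvOn
      (continuous_iff_continuousAt.2 fun t => (hmean t).continuousAt) isOpen_Ioo hτ hI
    have hvar := (tiltVariance_pos f hQ0 hnonconst (τ I)).ne'
    have hτ_deriv := (hmean (τ I)).of_local_left_inverse hτ_cont
      (mul_ne_zero (neg_ne_zero.2 (log_pos one_lt_two).ne') hvar)
      (eventually_of_mem (isOpen_Ioo.mem_nhds hI) hτ)
    rw [hDτ]
    refine ((hasDerivAt_tiltDivergence f hQ0 (τ I)).comp I hτ_deriv).congr_deriv ?_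
    field_simp
  refine ⟨hderiv, strictAntiOn_of_deriv_neg (convex_Ioo _ _)
    (fun I hI => (hderiv I hI).continuousAt.continuousWithinAt) fun I hI => ?_⟩
  rw [interior_Ioo] at hI
  rw [(hderiv I hI).deriv, neg_lt_zero]
  exact hτpos I hI

/-- The minimum divergence D(I) = D(P*(I)‖Q) is differentiable in the threshold I
with derivative −τ(I) < 0, hence strictly decreasing on (f_min, E_f(Q)). -/
theorem minimum_divergence_derivative
    {A : Type*} [Fintype A] [Nonempty A]
    (Q : A → ℝ) (hQ0 : ∀ a, 0 < Q a) (hQ1 : ∑ a, Q a = 1)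
    (f : A → ℝ) (hnonconst : ∃ a b, f a ≠ f b)
    (fmin : ℝ) (hfmin : fmin = Finset.univ.inf' Finset.univ_nonempty f)
    (τ : ℝ → ℝ)
    (hτpos : ∀ I ∈ Set.Ioo fmin (∑ a, Q a * f a), 0 < τ I)
    (Pstar : ℝ → A → ℝ)
    (hPstar : ∀ I a, Pstar I a = Q a * (2 : ℝ) ^ (-(τ I * f a)) /
        ∑ b, Q b * (2 : ℝ) ^ (-(τ I * f b)))
    (hPstarI : ∀ I ∈ Set.Ioo fmin (∑ a, Q a * f a), ∑ a, Pstar I a * f a = I)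
    (D : ℝ → ℝ)
    (hD : ∀ I, D I = ∑ a, Pstar I a * Real.logb 2 (Pstar I a / Q a)) :
    (∀ I ∈ Set.Ioo fmin (∑ a, Q a * f a), HasDerivAt D (-(τ I)) I) ∧
    StrictAntiOn D (Set.Ioo fmin (∑ a, Q a * f a)) :=
  minimum_divergence_derivative_general Q hQ0 f hnonconst fmin τ hτpos Pstar hPstar hPstarI D hD
end
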